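/- Atomic decomposition with logarithmic cost (Lemma 4.2): let b(x) = 1 + iA'(x) with A' ∈ L^∞(ℝ). Suppose f : ℝ → ℂ satisfies ∫_ℝ f(x) b(x) dx = 0 and |f(x)| ≤ χ_{I(x0,1)}(x) + χ_{I(y0,1)}(x) for a.e. x, where x0, y0 ∈ ℝ with |x0 − y0| = M > 100 and I(z,L) = {z' ∈ ℝ : |z'−z| < L}. Then there exist finitely many scalars α_j^i and functions a_j^i (j ∈ {1,2}, 1 ≤ i ≤ i0+1 with i0 ≈ log₂ M) such that: each a_j^i is supported in some bounded interval I_j^i, satisfies ‖a_j^i‖_{L^∞} ≤ 1/|I_j^i| and ∫_ℝ a_j^i(x) b(x) dx = 0 (i.e. each a_j^i is an H^1_b L^∞-atom), f = Σ_{j=1}^2 Σ_{i=1}^{i0+1} α_j^i a_j^i, and Σ_{j,i} |α_j^i| ≤ C log M with C depending only on ‖b‖_{L^∞}. In particular f ∈ H^1_b(ℝ) with ‖f‖_{H^1_b(ℝ)} ≤ C log M. -/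

import Mathlib

open MeasureTheory Filter Set
open scoped ENNReal Topology NNReal

noncomputable section

/-- The accretive function `b(x) = 1 + i A'(x)`. -/
def bFun (A' : ℝ → ℝ) : ℝ → ℂ := fun x => 1 + Complex.I * (A' x : ℂ)

/-- The kernel of the Cauchy integral `C_Γ` associated with the Lipschitz curve
`Γ = {x + iA(x) : x ∈ ℝ}`. -/
def cauchyKer (A A' : ℝ → ℝ) (x y : ℝ) : ℂ :=
  ((Real.pi : ℂ) * Complex.I)⁻¹ *
    ((1 + Complex.I * (A' y : ℂ)) /
      ((y : ℂ) - (x : ℂ) + Complex.I * ((A y : ℂ) - (A x : ℂ))))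

/-- The kernel of the related Cauchy operator `C̃_Γ`. -/
def relKer (A : ℝ → ℝ) (x y : ℝ) : ℂ :=
  ((Real.pi : ℂ) * Complex.I)⁻¹ *
    (1 / ((y : ℂ) - (x : ℂ) + Complex.I * ((A y : ℂ) - (A x : ℂ))))

/-- `IsPV K f x z` : `z` is the principal value `p.v. ∫ K(x,y) f(y) dy`. -/
def IsPV (K : ℝ → ℝ → ℂ) (f : ℝ → ℂ) (x : ℝ) (z : ℂ) : Prop :=
  Tendsto (fun ε : ℝ => ∫ y in {y : ℝ | ε < |y - x|}, K x y * f y)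
    (𝓝[>] (0 : ℝ)) (𝓝 z)

/-- `T` is (the `L^p`-extension of) the principal value singular integral operator with
kernel `K`: for every `f ∈ L^p(ℝ)`, `1 < p < ∞`, at a.e. `x` the value `T f x` is the
principal value of `∫ K(x,y) f(y) dy`. -/
def IsPVOp (K : ℝ → ℝ → ℂ) (T : (ℝ → ℂ) → ℝ → ℂ) : Prop :=
  ∀ p : ℝ≥0∞, 1 < p → p < ⊤ → ∀ f : ℝ → ℂ, MemLp f p volume →
    ∀ᵐ x ∂volume, IsPV K f x (T f x)

/-- `T` is bounded on `L^p(ℝ)` with constant `C`. -/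
def BddOnLp (p : ℝ≥0∞) (T : (ℝ → ℂ) → ℝ → ℂ) (C : ℝ) : Prop :=
  ∀ f : ℝ → ℂ, MemLp f p volume →
    MemLp (T f) p volume ∧
      eLpNorm (T f) p volume ≤ ENNReal.ofReal C * eLpNorm f p volume

/-- `T` is a compact operator on `L^p(ℝ)`: every `L^p`-bounded sequence has a subsequence
whose image under `T` is Cauchy in the `L^p` (semi)metric; equivalently, `T` maps bounded
sets to precompact (totally bounded) sets. -/
def CompactOnLp (p : ℝ≥0∞) (T : (ℝ → ℂ) → ℝ → ℂ) : Prop :=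
  ∀ (f : ℕ → ℝ → ℂ) (C : ℝ≥0∞), (∀ n, MemLp (f n) p volume) →
    (∀ n, eLpNorm (f n) p volume ≤ C) →
    ∃ φ : ℕ → ℕ, StrictMono φ ∧
      ∀ ε : ℝ≥0∞, 0 < ε → ∃ N : ℕ, ∀ m ≥ N, ∀ n ≥ N,
        eLpNorm (fun x => T (f (φ m)) x - T (f (φ n)) x) p volume < ε

/-- The bilinear `L²`-pairing `⟨u, v⟩ = ∫ u v`. -/
def pairing (u v : ℝ → ℂ) : ℂ := ∫ x, u x * v x

/-- `S` is the adjoint of `T` with respect to the bilinear pairing `⟨u,v⟩ = ∫ u v`. -/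
def IsBilinAdjoint (T S : (ℝ → ℂ) → ℝ → ℂ) : Prop :=
  ∀ f g : ℝ → ℂ, MemLp f 2 volume → MemLp g 2 volume →
    pairing (T f) g = pairing f (S g)

/-- The bilinear form `Π_b(g,h) = b⁻¹ (g • T h − h • T* g)`. -/
def PiB (b : ℝ → ℂ) (T Tstar : (ℝ → ℂ) → ℝ → ℂ) (g h : ℝ → ℂ) : ℝ → ℂ :=
  fun x => (b x)⁻¹ * (g x * T h x - h x * Tstar g x)

/-- The commutator `[a, T] f = a • T f − T (a f)`. -/
def commutatorFn (a : ℝ → ℂ) (T : (ℝ → ℂ) → ℝ → ℂ) (f : ℝ → ℂ) : ℝ → ℂ :=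
  fun x => a x * T f x - T (fun y => a y * f y) x

/-- The mean oscillation of `f` over the interval `(a, c)`. -/
def meanOsc (f : ℝ → ℂ) (a c : ℝ) : ℝ :=
  (c - a)⁻¹ * ∫ x in a..c, ‖f x - (c - a)⁻¹ • ∫ y in a..c, f y‖

/-- The set of all mean oscillations of `f` over bounded intervals. -/
def bmoSet (f : ℝ → ℂ) : Set ℝ := {t | ∃ a c : ℝ, a < c ∧ t = meanOsc f a c}

/-- `f ∈ BMO(ℝ)`. -/
def MemBMO (f : ℝ → ℂ) : Prop :=
  LocallyIntegrable f volume ∧ BddAbove (bmoSet f)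

/-- The `BMO` seminorm of `f`. -/
def bmoNorm (f : ℝ → ℂ) : ℝ := sSup (bmoSet f)

/-- `f ∈ VMO(ℝ)`: `f ∈ BMO(ℝ)` and the mean oscillations vanish uniformly over small
intervals, over large intervals, and over intervals far from the origin. -/
def MemVMO (f : ℝ → ℂ) : Prop :=
  MemBMO f ∧
    (∀ ε : ℝ, 0 < ε → ∃ δ : ℝ, 0 < δ ∧
      ∀ a c : ℝ, a < c → c - a < δ → meanOsc f a c < ε) ∧
    (∀ ε : ℝ, 0 < ε → ∃ R : ℝ, 0 < R ∧
      ∀ a c : ℝ, a < c → R < c - a → meanOsc f a c < ε) ∧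
    (∀ ε : ℝ, 0 < ε → ∃ R : ℝ, 0 < R ∧
      ∀ a c : ℝ, a < c → (c ≤ -R ∨ R ≤ a) → meanOsc f a c < ε)

/-- `𝔄 ∈ BMO_b(ℝ)` iff `𝔄 / b ∈ BMO(ℝ)`. -/
def MemBMOb (b f : ℝ → ℂ) : Prop := MemBMO (fun x => f x / b x)

/-- `‖𝔄‖_{BMO_b} := ‖𝔄 / b‖_{BMO}`. -/
def bmobNorm (b f : ℝ → ℂ) : ℝ := bmoNorm (fun x => f x / b x)

/-- `𝔄 ∈ VMO_b(ℝ)` iff `𝔄 / b ∈ VMO(ℝ)`. -/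
def MemVMOb (b f : ℝ → ℂ) : Prop := MemVMO (fun x => f x / b x)

/-- An `H¹_b(ℝ)` `L^∞`-atom: supported in an interval `I = I(x0, r)`, with
`‖a‖_∞ ≤ 1/|I|` and the cancellation `∫ a b = 0`. Taking `b ≡ 1` gives classical
`H¹(ℝ)` `L^∞`-atoms. -/
def IsAtomB (b a : ℝ → ℂ) : Prop :=
  ∃ x0 r : ℝ, 0 < r ∧ (∀ x, x ∉ Metric.ball x0 r → a x = 0) ∧
    (∀ x, ‖a x‖ ≤ (2 * r)⁻¹) ∧
    Integrable (fun x => a x * b x) volume ∧ (∫ x, a x * b x) = 0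

/-- The `ℓ¹`-sums of coefficients of atomic decompositions of `f` into `H¹_b` atoms. -/
def h1bReps (b f : ℝ → ℂ) : Set ℝ :=
  {t | ∃ (lam : ℕ → ℂ) (a : ℕ → ℝ → ℂ),
        (∀ j, IsAtomB b (a j)) ∧ Summable (fun j => ‖lam j‖) ∧
        (∀ᵐ x ∂volume, HasSum (fun j => lam j * a j x) (f x)) ∧
        t = ∑' j, ‖lam j‖}

/-- `f ∈ H¹_b(ℝ)`: `f` is integrable and admits an atomic decomposition. -/
def MemH1b (b f : ℝ → ℂ) : Prop := Integrable f volume ∧ (h1bReps b f).Nonempty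

/-- The atomic `H¹_b(ℝ)` norm (with value `⊤` when `f ∉ H¹_b(ℝ)`). -/
def h1bNorm (b f : ℝ → ℂ) : ℝ≥0∞ := ⨅ t ∈ h1bReps b f, ENNReal.ofReal t

end

/-!
Normalise cancellation with the bumps `φ_{z,r} = χ_{I(z,r)} / ∫_{I(z,r)} b`: they satisfy
`∫ φ_{z,r} b = 1` and, because `Re b ≥ 1`, `|φ_{z,r}| ≤ 1/(2r)`. Write `f = f₁ + f₂` with
`fⱼ` supported in the two unit intervals and let `c = ∫ f₁ b = -∫ f₂ b`. Then `f₁ - c φ_{x0,1}`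
and `f₂ + c φ_{y0,1}` are bounded multiples of atoms, and the remainder `c (φ_{x0,1} - φ_{y0,1})`
telescopes through the dyadic bumps `φ_{x0,2^i}` and `φ_{y0,2^i}`, `i ≤ N`, with `2^N ≥ M`. Each
difference of two consecutive bumps, and the final `c (φ_{x0,2^N} - φ_{y0,2^N})` (both bumps lie
in `I(x0, 2^{N+1})`), is `O(|c|)` times an atom; there are `O(N) = O(log M)` of them.
-/

open Metric

lemma MeasureTheory.LocallyIntegrable.integrableOn_ball {X E : Type*} [PseudoMetricSpace X]
    [ProperSpace X] [MeasurableSpace X] [NormedAddCommGroup E] {μ : Measure X} {f : X → E}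
    (hf : LocallyIntegrable f μ) (z : X) (r : ℝ) : IntegrableOn f (ball z r) μ :=
  (hf.integrableOn_isCompact (isCompact_closedBall z r)).mono_set ball_subset_closedBall

section Bump

variable {b : ℝ → ℂ}

noncomputable def bump (b : ℝ → ℂ) (z r : ℝ) : ℝ → ℂ :=
  (ball z r).indicator fun _ => (∫ y in ball z r, b y)⁻¹

lemma two_mul_le_re_setIntegral_ball (hb : LocallyIntegrable b volume)
    (hre : ∀ x, 1 ≤ (b x).re) (z : ℝ) {r : ℝ} (hr : 0 ≤ r) :
    2 * r ≤ (∫ y in ball z r, b y).re := by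
  have hbB := hb.integrableOn_ball z r
  rw [← RCLike.re_eq_complex_re, ← integral_re hbB]
  calc 2 * r = 1 * volume.real (ball z r) := by
        rw [Real.volume_real_ball hr, one_mul]
    _ ≤ ∫ y in ball z r, (b y).re :=
        setIntegral_ge_of_const_le_real measurableSet_ball measure_ball_lt_top.ne
          (fun y _ => hre y) hbB.re

lemma norm_bump_le (hb : LocallyIntegrable b volume) (hre : ∀ x, 1 ≤ (b x).re)
    (z : ℝ) {r : ℝ} (hr : 0 < r) (x : ℝ) : ‖bump b z r x‖ ≤ (2 * r)⁻¹ := by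
  refine norm_indicator_le_norm_self _ _ |>.trans ?_
  rw [norm_inv]
  exact inv_anti₀ (by positivity)
    ((two_mul_le_re_setIntegral_ball hb hre z hr.le).trans (Complex.re_le_norm _))

lemma bump_mul_eq_indicator (z r : ℝ) :
    (fun x => bump b z r x * b x) =
      (ball z r).indicator fun x => (∫ y in ball z r, b y)⁻¹ * b x := by
  ext x
  by_cases hx : x ∈ ball z r <;> simp [bump, hx]

lemma integrable_bump_mul (hb : LocallyIntegrable b volume) (z r : ℝ) :
    Integrable (fun x => bump b z r x * b x) := by
  rw [bump_mul_eq_indicator, integrable_indicator_iff measurableSet_ball]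
  exact (hb.integrableOn_ball z r).const_mul _

lemma integral_bump_mul (hb : LocallyIntegrable b volume) (hre : ∀ x, 1 ≤ (b x).re)
    (z : ℝ) {r : ℝ} (hr : 0 < r) : ∫ x, bump b z r x * b x = 1 := by
  have hpos := two_mul_le_re_setIntegral_ball hb hre z hr.le
  rw [bump_mul_eq_indicator, integral_indicator measurableSet_ball, integral_const_mul]
  refine inv_mul_cancel₀ fun h => ?_
  rw [h, Complex.zero_re] at hpos
  linarith

end Bump

def HasAtomicDecomp (b u : ℝ → ℂ) (c : ℝ) : Prop :=
  ∃ (n : ℕ) (α : Fin n → ℂ) (a : Fin n → ℝ → ℂ),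
    (∀ i, IsAtomB b (a i)) ∧ (∀ x, u x = ∑ i, α i * a i x) ∧ ∑ i, ‖α i‖ ≤ c

namespace HasAtomicDecomp

variable {b u v : ℝ → ℂ} {c d : ℝ}

lemma zero : HasAtomicDecomp b (fun _ => 0) 0 :=
  ⟨0, Fin.elim0, Fin.elim0, fun i => i.elim0, fun _ => by simp, by simp⟩

lemma mono (hu : HasAtomicDecomp b u c) (hcd : c ≤ d) : HasAtomicDecomp b u d := by
  obtain ⟨n, α, a, ha, hsum, hc⟩ := hu
  exact ⟨n, α, a, ha, hsum, hc.trans hcd⟩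

lemma congr (hu : HasAtomicDecomp b u c) (h : ∀ x, u x = v x) : HasAtomicDecomp b v c := by
  obtain ⟨n, α, a, ha, hsum, hc⟩ := hu
  exact ⟨n, α, a, ha, fun x => h x ▸ hsum x, hc⟩

lemma add (hu : HasAtomicDecomp b u c) (hv : HasAtomicDecomp b v d) :
    HasAtomicDecomp b (fun x => u x + v x) (c + d) := by
  obtain ⟨n, α, a, ha, hu, hc⟩ := hu
  obtain ⟨m, β, e, he, hv, hd⟩ := hv
  refine ⟨n + m, Fin.append α β, Fin.append a e, fun i => ?_, fun x => ?_, ?_⟩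
  · induction i using Fin.addCases with
    | left i => simpa only [Fin.append_left] using ha i
    | right i => simpa only [Fin.append_right] using he i
  · simp only [Fin.sum_univ_add, Fin.append_left, Fin.append_right, hu x, hv x]
  · simpa only [Fin.sum_univ_add, Fin.append_left, Fin.append_right] using add_le_add hc hd

lemma finset_sum {ι : Type*} (s : Finset ι) {u : ι → ℝ → ℂ} {c : ι → ℝ}
    (h : ∀ i ∈ s, HasAtomicDecomp b (u i) (c i)) :
    HasAtomicDecomp b (fun x => ∑ i ∈ s, u i x) (∑ i ∈ s, c i) := by
  classical
  induction s using Finset.induction_on with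
  | empty => simpa using zero
  | insert i s hi ih =>
    simp only [Finset.sum_insert hi]
    exact (h i (Finset.mem_insert_self _ _)).add
      (ih fun j hj => h j (Finset.mem_insert_of_mem hj))

lemma of_support_ball {z r m : ℝ} (hr : 0 < r) (hm : 0 ≤ m)
    (hsupp : ∀ x ∉ ball z r, u x = 0) (hbd : ∀ x, ‖u x‖ ≤ m * (2 * r)⁻¹)
    (hint : Integrable (fun x => u x * b x)) (h0 : ∫ x, u x * b x = 0) :
    HasAtomicDecomp b u m := by
  refine ⟨1, fun _ => m, fun _ x => (m : ℂ)⁻¹ * u x,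
    fun _ => ⟨z, r, hr, fun x hx => by simp [hsupp x hx], fun x => ?_, ?_, ?_⟩,
    fun x => ?_, by simp [abs_of_nonneg hm]⟩
  · rw [norm_mul, norm_inv, Complex.norm_real, Real.norm_of_nonneg hm]
    rcases hm.eq_or_lt with rfl | hm
    · simp only [inv_zero, zero_mul]; positivity
    · calc m⁻¹ * ‖u x‖ ≤ m⁻¹ * (m * (2 * r)⁻¹) := by gcongr; exact hbd x
        _ = (2 * r)⁻¹ := by field_simp
  · simpa only [mul_assoc] using hint.const_mul (m : ℂ)⁻¹
  · simp only [mul_assoc]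
    rw [integral_const_mul, h0, mul_zero]
  · rcases hm.eq_or_lt with rfl | hm
    · simpa using hbd x
    · have : (m : ℂ) ≠ 0 := by exact_mod_cast hm.ne'
      simp [this]

end HasAtomicDecomp

section Pieces

variable {b : ℝ → ℂ}

lemma norm_integral_mul_le_of_support_ball {K : ℝ} (hK : ∀ x, ‖b x‖ ≤ K) {u : ℝ → ℂ}
    {z r m : ℝ} (hr : 0 ≤ r) (hsupp : ∀ x ∉ ball z r, u x = 0) (hbd : ∀ x, ‖u x‖ ≤ m) :
    ‖∫ x, u x * b x‖ ≤ 2 * r * m * K := by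
  rw [← setIntegral_eq_integral_of_forall_compl_eq_zero fun x hx => by simp [hsupp x hx]]
  calc ‖∫ x in ball z r, u x * b x‖ ≤ m * K * volume.real (ball z r) :=
        norm_setIntegral_le_of_norm_le_const measure_ball_lt_top fun x _ => by
          rw [norm_mul]
          exact mul_le_mul (hbd x) (hK x) (norm_nonneg _) ((norm_nonneg _).trans (hbd x))
    _ = 2 * r * m * K := by rw [Real.volume_real_ball hr]; ring

lemma hasAtomicDecomp_sub_smul_bump (hb : LocallyIntegrable b volume)
    (hre : ∀ x, 1 ≤ (b x).re) {K : ℝ} (hK : ∀ x, ‖b x‖ ≤ K) {u : ℝ → ℂ} {z r m : ℝ}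
    (hr : 0 < r) (hsupp : ∀ x ∉ ball z r, u x = 0) (hbd : ∀ x, ‖u x‖ ≤ m)
    (hint : Integrable (fun x => u x * b x)) :
    HasAtomicDecomp b (fun x => u x - (∫ y, u y * b y) * bump b z r x) (2 * r * m * (1 + K)) := by
  set c := ∫ y, u y * b y
  have hc : ‖c‖ ≤ 2 * r * m * K := norm_integral_mul_le_of_support_ball hK hr.le hsupp hbd
  have hm : 0 ≤ m := (norm_nonneg _).trans (hbd 0)
  have hK0 : 0 ≤ K := (norm_nonneg _).trans (hK 0)
  refine HasAtomicDecomp.of_support_ball (z := z) hr (by positivity) (fun x hx => ?_) (fun x => ?_)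
    ?_ ?_
  · simp [hsupp x hx, bump, hx]
  · calc ‖u x - c * bump b z r x‖ ≤ m + 2 * r * m * K * (2 * r)⁻¹ := by
          refine (norm_sub_le _ _).trans (add_le_add (hbd x) ?_)
          rw [norm_mul]
          exact mul_le_mul hc (norm_bump_le hb hre z hr x) (norm_nonneg _) (by positivity)
      _ = 2 * r * m * (1 + K) * (2 * r)⁻¹ := by field_simp
  · exact (hint.sub ((integrable_bump_mul hb z r).const_mul c)).congr
      (ae_of_all _ fun x => by simp only [Pi.sub_apply]; ring)
  · simp only [sub_mul, mul_assoc]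
    rw [integral_sub hint ((integrable_bump_mul hb z r).const_mul c), integral_const_mul,
      integral_bump_mul hb hre z hr, mul_one, sub_self]

lemma hasAtomicDecomp_smul_bump_sub_bump (hb : LocallyIntegrable b volume)
    (hre : ∀ x, 1 ≤ (b x).re) (c : ℂ) {z w u r s R : ℝ} (hr : 0 < r) (hs : 0 < s)
    (hzr : ball z r ⊆ ball u R) (hws : ball w s ⊆ ball u R) :
    HasAtomicDecomp b (fun x => c * (bump b z r x - bump b w s x))
      (‖c‖ * (2 * R) * ((2 * r)⁻¹ + (2 * s)⁻¹)) := by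
  have hR : 0 < R := by
    simpa using (nonempty_ball.2 hr).mono hzr
  refine HasAtomicDecomp.of_support_ball (z := u) hR (by positivity) (fun x hx => ?_) (fun x => ?_)
    ?_ ?_
  · have hxz : x ∉ ball z r := fun h => hx (hzr h)
    have hxw : x ∉ ball w s := fun h => hx (hws h)
    simp [bump, hxz, hxw]
  · calc ‖c * (bump b z r x - bump b w s x)‖ ≤ ‖c‖ * ((2 * r)⁻¹ + (2 * s)⁻¹) := by
          rw [norm_mul]
          gcongr
          exact (norm_sub_le _ _).trans
            (add_le_add (norm_bump_le hb hre z hr x) (norm_bump_le hb hre w hs x))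
      _ = ‖c‖ * (2 * R) * ((2 * r)⁻¹ + (2 * s)⁻¹) * (2 * R)⁻¹ := by field_simp
  · exact (((integrable_bump_mul hb z r).sub (integrable_bump_mul hb w s)).const_mul c).congr
      (ae_of_all _ fun x => by simp only [Pi.sub_apply]; ring)
  · simp only [mul_sub, sub_mul, mul_assoc]
    rw [integral_sub ((integrable_bump_mul hb z r).const_mul c)
      ((integrable_bump_mul hb w s).const_mul c), integral_const_mul, integral_const_mul,
      integral_bump_mul hb hre z hr, integral_bump_mul hb hre w hs, sub_self]

lemma hasAtomicDecomp_smul_bump_sub_bump_two_pow (hb : LocallyIntegrable b volume)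
    (hre : ∀ x, 1 ≤ (b x).re) (c : ℂ) (z : ℝ) (N : ℕ) :
    HasAtomicDecomp b (fun x => c * (bump b z 1 x - bump b z (2 ^ N) x)) (N * (3 * ‖c‖)) := by
  have hstep : ∀ i ∈ Finset.range N, HasAtomicDecomp b
      (fun x => c * (bump b z (2 ^ i) x - bump b z (2 ^ (i + 1)) x)) (3 * ‖c‖) := by
    intro i _
    refine (hasAtomicDecomp_smul_bump_sub_bump hb hre c (by positivity) (by positivity)
      (ball_subset_ball (pow_le_pow_right₀ one_le_two i.le_succ)) subset_rfl).mono
      (le_of_eq ?_)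
    rw [pow_succ]
    field_simp
    ring
  refine ((HasAtomicDecomp.finset_sum _ hstep).congr fun x => ?_).mono (by simp)
  rw [← Finset.mul_sum, Finset.sum_range_sub' (fun i => bump b z (2 ^ i) x), pow_zero]

end Pieces

lemma eq_indicator_add_indicator_of_norm_le {X E : Type*} [NormedAddCommGroup E]
    {g : X → E} {s t : Set X} (hst : Disjoint s t)
    (hg : ∀ x, ‖g x‖ ≤ s.indicator (fun _ => (1:ℝ)) x + t.indicator (fun _ => (1:ℝ)) x) (x : X) :
    g x = s.indicator g x + t.indicator g x := by
  rw [← indicator_union_of_notMem_inter (fun h => hst.le_bot h)]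
  by_cases hx : x ∈ s ∪ t
  · rw [indicator_of_mem hx]
  · rw [indicator_of_notMem hx]
    simp only [mem_union, not_or] at hx
    simpa [hx.1, hx.2] using hg x

theorem hasAtomicDecomp_of_norm_le_indicator_add_indicator {b g : ℝ → ℂ}
    (hb : LocallyIntegrable b volume) (hre : ∀ x, 1 ≤ (b x).re) {K : ℝ}
    (hK : ∀ x, ‖b x‖ ≤ K) {x0 y0 : ℝ} {N : ℕ} (hsep : 2 ≤ dist x0 y0)
    (hN : dist x0 y0 ≤ 2 ^ N)
    (hg : ∀ x, ‖g x‖ ≤ (ball x0 1).indicator (fun _ => (1:ℝ)) x +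
      (ball y0 1).indicator (fun _ => (1:ℝ)) x)
    (hgb : Integrable (fun x => g x * b x)) (h0 : ∫ x, g x * b x = 0) :
    HasAtomicDecomp b g (8 * (1 + K) + (6 * N + 4) * (4 * K)) := by
  set g₁ := (ball x0 1).indicator g with hg₁
  set g₂ := (ball y0 1).indicator g with hg₂
  have hsplit : ∀ x, g x = g₁ x + g₂ x := eq_indicator_add_indicator_of_norm_le
    (ball_disjoint_ball (by linarith : (1:ℝ) + 1 ≤ dist x0 y0)) hg
  have hg2 : ∀ x, ‖g x‖ ≤ 2 := fun x => by
    have h1 : ∀ z, (ball z 1).indicator (fun _ => (1:ℝ)) x ≤ 1 := fun z =>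
      indicator_le_self' (fun _ _ => zero_le_one) x
    linarith [hg x, h1 x0, h1 y0]
  have hint : ∀ z, Integrable (fun x => (ball z 1).indicator g x * b x) := fun z =>
    (hgb.indicator (s := ball z 1) measurableSet_ball).congr
      (ae_of_all _ fun x => by by_cases hx : x ∈ ball z 1 <;> simp [hx])
  have hsupp : ∀ z, ∀ x ∉ ball z 1, (ball z 1).indicator g x = 0 := fun z x hx =>
    indicator_of_notMem hx g
  have hbd : ∀ z x, ‖(ball z 1).indicator g x‖ ≤ 2 := fun z x =>
    norm_indicator_le_norm_self g x |>.trans (hg2 x)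
  set c := ∫ x, g₁ x * b x with hc
  have hc₂ : ∫ x, g₂ x * b x = -c := by
    refine eq_neg_of_add_eq_zero_right ?_
    rw [hc, ← integral_add (hint x0) (hint y0), ← h0]
    simp only [← add_mul]
    exact integral_congr_ae (ae_of_all _ fun x => by simp only [hsplit x, hg₁, hg₂])
  have hcK : ‖c‖ ≤ 4 * K := by
    have := norm_integral_mul_le_of_support_ball hK zero_le_one (hsupp x0) (hbd x0)
    linarith
  have D₁ := hasAtomicDecomp_sub_smul_bump hb hre hK one_pos (hsupp x0) (hbd x0) (hint x0)
  have D₂ := hasAtomicDecomp_sub_smul_bump hb hre hK one_pos (hsupp y0) (hbd y0) (hint y0)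
  rw [hc₂] at D₂
  have T₁ := hasAtomicDecomp_smul_bump_sub_bump_two_pow hb hre c x0 N
  have T₂ := hasAtomicDecomp_smul_bump_sub_bump_two_pow hb hre (-c) y0 N
  have hpow : (2:ℝ) ^ (N + 1) = 2 ^ N + 2 ^ N := by ring
  have F := hasAtomicDecomp_smul_bump_sub_bump hb hre c (by positivity) (by positivity)
    (ball_subset_ball (by linarith : (2:ℝ) ^ N ≤ 2 ^ (N + 1)))
    (ball_subset_ball' (by rw [dist_comm]; linarith : (2:ℝ) ^ N + dist y0 x0 ≤ 2 ^ (N + 1)))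
  refine (((((D₁.add D₂).add T₁).add T₂).add F).congr fun x => ?_).mono ?_
  · rw [hsplit x]
    ring
  · have hF : ‖c‖ * (2 * 2 ^ (N + 1)) * ((2 * 2 ^ N)⁻¹ + (2 * 2 ^ N)⁻¹) = 4 * ‖c‖ := by
      rw [pow_succ]
      field_simp
      ring
    rw [hF, norm_neg]
    nlinarith [mul_le_mul_of_nonneg_left hcK (by positivity : (0:ℝ) ≤ 6 * N + 4)]

lemma exists_ae_eq_forall_norm_le {α E : Type*} [MeasurableSpace α] {μ : Measure α}
    [NormedAddCommGroup E] {f : α → E} {B : α → ℝ} (hB : ∀ x, 0 ≤ B x)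
    (hf : ∀ᵐ x ∂μ, ‖f x‖ ≤ B x) : ∃ g : α → E, f =ᵐ[μ] g ∧ ∀ x, ‖g x‖ ≤ B x := by
  set S := {x | ‖f x‖ ≤ B x}
  refine ⟨S.indicator f, hf.mono fun x hx => (indicator_of_mem (s := S) hx f).symm, fun x => ?_⟩
  by_cases hx : ‖f x‖ ≤ B x
  · simp [S, hx]
  · simp [S, hx, hB x]

lemma exists_le_two_pow_le_two_mul_log {M : ℝ} (hM : 8 ≤ M) :
    ∃ N : ℕ, M ≤ 2 ^ N ∧ (N : ℝ) ≤ 2 * Real.log M := by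
  have hlog2 := Real.log_two_gt_d9
  have hlogM : 3 * Real.log 2 ≤ Real.log M := by
    rw [← Real.log_rpow two_pos]
    exact Real.log_le_log (by positivity) (by norm_num; linarith)
  refine ⟨⌊2 * Real.log M⌋₊, ?_, Nat.floor_le (by linarith)⟩
  rw [← Real.log_le_log_iff (by linarith) (by positivity), Real.log_pow]
  nlinarith [Nat.lt_floor_add_one (2 * Real.log M)]

lemma isAtomB_zero (b : ℝ → ℂ) : IsAtomB b 0 :=
  ⟨0, 1, one_pos, fun _ _ => rfl, fun _ => by simp, by simp, by simp⟩

lemma sum_norm_mem_h1bReps {b f : ℝ → ℂ} {n : ℕ} {α : Fin n → ℂ} {a : Fin n → ℝ → ℂ}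
    (ha : ∀ i, IsAtomB b (a i)) (hf : ∀ᵐ x, f x = ∑ i, α i * a i x) :
    ∑ i, ‖α i‖ ∈ h1bReps b f := by
  have hval : Function.Injective (Fin.val : Fin n → ℕ) := Fin.val_injective
  set lam := Function.extend Fin.val α 0
  set a' := Function.extend Fin.val a 0 with ha'
  have hterm : ∀ x,
      (fun j => lam j * a' j x) = Function.extend Fin.val (fun i => α i * a i x) 0 := by
    intro x
    ext j
    by_cases hj : ∃ i : Fin n, i.val = j
    · obtain ⟨i, rfl⟩ := hj
      simp [lam, a', hval.extend_apply]
    · simp [lam, a', Function.extend_apply' _ _ _ hj]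
  have hnorm : (fun j => ‖lam j‖) = Function.extend Fin.val (fun i => ‖α i‖) 0 := by
    ext j
    by_cases hj : ∃ i : Fin n, i.val = j
    · obtain ⟨i, rfl⟩ := hj
      simp [lam, hval.extend_apply]
    · simp [lam, Function.extend_apply' _ _ _ hj]
  refine ⟨lam, a', fun j => ?_, ?_, ?_, ?_⟩
  · by_cases hj : ∃ i : Fin n, i.val = j
    · obtain ⟨i, rfl⟩ := hj
      rw [ha', hval.extend_apply]
      exact ha i
    · rw [ha', Function.extend_apply' _ _ _ hj]
      exact isAtomB_zero b
  · rw [hnorm]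
    exact ((hasSum_extend_zero hval).2 (hasSum_fintype _)).summable
  · filter_upwards [hf] with x hx
    rw [hterm, hx, hasSum_extend_zero hval]
    exact hasSum_fintype _
  · rw [hnorm, tsum_extend_zero hval, tsum_fintype]

section BFun

variable {A' : ℝ → ℝ} {L : ℝ≥0}

lemma bFun_re (x : ℝ) : (bFun A' x).re = 1 := by
  simp [bFun]

lemma norm_bFun_le (hA'bd : ∀ x, |A' x| ≤ (L : ℝ)) (x : ℝ) : ‖bFun A' x‖ ≤ 1 + L := by
  refine (norm_add_le _ _).trans ?_
  rw [norm_one, norm_mul, Complex.norm_I, one_mul, Complex.norm_real, Real.norm_eq_abs]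
  gcongr
  exact hA'bd x

lemma locallyIntegrable_bFun (hA'meas : Measurable A') (hA'bd : ∀ x, |A' x| ≤ (L : ℝ)) :
    LocallyIntegrable (bFun A') volume :=
  (memLp_top_of_bound (by unfold bFun; fun_prop) _
    (ae_of_all _ (norm_bFun_le hA'bd))).locallyIntegrable le_top

end BFun

theorem atomic_decomposition_log_cost_general
    (A' : ℝ → ℝ) (L : ℝ≥0)
    (hA'meas : Measurable A') (hA'bd : ∀ x, |A' x| ≤ (L : ℝ)) :
    ∃ C : ℝ, 0 < C ∧ ∀ (f : ℝ → ℂ) (x0 y0 M : ℝ),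
      AEStronglyMeasurable f volume →
      100 < M → |x0 - y0| = M →
      (∀ᵐ x ∂volume, ‖f x‖ ≤ (Metric.ball x0 1).indicator (fun _ => (1:ℝ)) x +
        (Metric.ball y0 1).indicator (fun _ => (1:ℝ)) x) →
      Integrable (fun x => f x * bFun A' x) volume →
      (∫ x, f x * bFun A' x) = 0 →
      (∃ (n : ℕ) (α : Fin n → ℂ) (a : Fin n → ℝ → ℂ),
        (∀ i, IsAtomB (bFun A') (a i)) ∧
        (∀ᵐ x ∂volume, f x = ∑ i, α i * a i x) ∧
        (∑ i, ‖α i‖) ≤ C * Real.log M) ∧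
      MemH1b (bFun A') f ∧
      h1bNorm (bFun A') f ≤ ENNReal.ofReal (C * Real.log M) := by
  refine ⟨100 * (1 + L), by positivity, fun f x0 y0 M hfmeas hM hxy hbound hfb hfb0 => ?_⟩
  have hdist : dist x0 y0 = M := by rw [Real.dist_eq, hxy]
  obtain ⟨g, hfg, hg⟩ := exists_ae_eq_forall_norm_le
    (fun x => add_nonneg (indicator_nonneg (fun _ _ => zero_le_one) x)
      (indicator_nonneg (fun _ _ => zero_le_one) x)) hbound
  obtain ⟨N, hMN, hNlog⟩ := exists_le_two_pow_le_two_mul_log (by linarith : 8 ≤ M)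
  have hdec := hasAtomicDecomp_of_norm_le_indicator_add_indicator
    (locallyIntegrable_bFun hA'meas hA'bd) (fun x => (bFun_re x).ge) (norm_bFun_le hA'bd)
    (by linarith) (hdist.trans_le hMN) hg
    (hfb.congr (hfg.mono fun x hx => congrArg (· * bFun A' x) hx))
    (by rw [← hfb0]
        exact integral_congr_ae (hfg.mono fun x hx => congrArg (· * bFun A' x) hx.symm))
  have hlog : 1 ≤ Real.log M := by
    rw [Real.le_log_iff_exp_le (by linarith)]
    linarith [Real.exp_one_lt_d9]
  obtain ⟨n, α, a, hatom, hsum, hcost⟩ := hdec.mono (d := 100 * (1 + L) * Real.log M) <| by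
    nlinarith [L.coe_nonneg, mul_le_mul_of_nonneg_right hNlog (by positivity : (0:ℝ) ≤ 1 + L),
      mul_nonneg L.coe_nonneg (sub_nonneg.2 hlog)]
  have hfa : ∀ᵐ x, f x = ∑ i, α i * a i x := hfg.mono fun x hx => hx.trans (hsum x)
  have hmem := sum_norm_mem_h1bReps hatom hfa
  have hind : ∀ z : ℝ, Integrable ((ball z 1).indicator fun _ => (1:ℝ)) := fun z =>
    (integrable_indicator_iff measurableSet_ball).2
      (integrableOn_const measure_ball_lt_top.ne enorm_ne_top)
  have hfint : Integrable f := ((hind x0).add (hind y0)).mono' hfmeas hbound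
  exact ⟨⟨n, α, a, hatom, hfa, hcost⟩, ⟨hfint, _, hmem⟩,
    (iInf₂_le _ hmem).trans (ENNReal.ofReal_le_ofReal hcost)⟩

/-- **Lemma 4.2.** Let `b = 1 + iA'` with `A' ∈ L^∞(ℝ)`. If `∫ f b = 0` and
`|f| ≤ χ_{I(x0,1)} + χ_{I(y0,1)}` a.e. with `|x0 − y0| = M > 100`, then `f` admits a
finite decomposition `f = Σ_{j,i} α_j^i a_j^i` into `H¹_b(ℝ)` `L^∞`-atoms with
`Σ |α_j^i| ≤ C log M`; in particular `f ∈ H¹_b(ℝ)` with `‖f‖_{H¹_b} ≤ C log M`,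
where `C` depends only on `‖b‖_∞`. -/
theorem atomic_decomposition_log_cost
    (A A' : ℝ → ℝ) (L : ℝ≥0) (hA : LipschitzWith L A)
    (hA' : ∀ᵐ x ∂volume, HasDerivAt A (A' x) x)
    (hA'meas : Measurable A') (hA'bd : ∀ x, |A' x| ≤ (L : ℝ)) :
    ∃ C : ℝ, 0 < C ∧ ∀ (f : ℝ → ℂ) (x0 y0 M : ℝ),
      AEStronglyMeasurable f volume →
      100 < M → |x0 - y0| = M →
      (∀ᵐ x ∂volume, ‖f x‖ ≤ (Metric.ball x0 1).indicator (fun _ => (1:ℝ)) x +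
        (Metric.ball y0 1).indicator (fun _ => (1:ℝ)) x) →
      Integrable (fun x => f x * bFun A' x) volume →
      (∫ x, f x * bFun A' x) = 0 →
      (∃ (n : ℕ) (α : Fin n → ℂ) (a : Fin n → ℝ → ℂ),
        (∀ i, IsAtomB (bFun A') (a i)) ∧
        (∀ᵐ x ∂volume, f x = ∑ i, α i * a i x) ∧
        (∑ i, ‖α i‖) ≤ C * Real.log M) ∧
      MemH1b (bFun A') f ∧
      h1bNorm (bFun A') f ≤ ENNReal.ofReal (C * Real.log M) :=
  atomic_decomposition_log_cost_general A' L hA'meas hA'bd
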